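/- arXiv:1203.6554 — 4 statements merged into one kernel-verified Lean document; each statement's English description precedes it below -/
import Mathlib

section
/- Let (S_n) be an upward skip-free (right-continuous) random walk on ℤ, i.e., the increment law μ is supported in {1, 0, −1, −2, −3, ...}. Then Kemperman's formula P[T_k = n] = ((k+1)/n) · P[S_n = k+1] holds for every integer k ≥ 0 and every n > k, where T_k = inf{n ≥ 1 : S_n > k}. -/
/-!
Kemperman's formula via the cycle lemma. Extend the increments `X 0, …, X (n-1)` periodically
and let `t` be the resulting walk, so that `t (m + n) = t m + t n`. If `t n = k + 1`, the cyclic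
shift starting at `j < n` first exceeds `k` at time `n` exactly when `j + n` is a strict record
time of `t`. Since upward jumps are at most `1`, the running maximum of `t` rises by exactly one
at each strict record, and over a window of length `n` it rises by `k + 1`; so exactly `k + 1`
of the `n` shifts first exceed `k` at time `n`. The law of `(X 0, …, X (n-1))` is a product
measure and hence invariant under cyclic shifts, and summing over the `n` shifts gives
`n · P[T_k = n] = (k + 1) · P[S_n = k + 1]`.
-/

open Finset MeasureTheory ProbabilityTheory
open scoped ENNReal

theorem card_filter_lt_succ_eq_sub (f : ℕ → ℤ) (hmono : ∀ j, f j ≤ f (j + 1))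
    (hstep : ∀ j, f (j + 1) ≤ f j + 1) (d : ℕ) :
    (#{j ∈ range d | f j < f (j + 1)} : ℤ) = f d - f 0 := by
  rw [natCast_card_filter, ← sum_range_sub]
  refine sum_congr rfl fun j _ => ?_
  have := hmono j
  have := hstep j
  split_ifs <;> omega

section Walk

variable {t : ℕ → ℤ}

theorem partialSups_succ_le_add_one (ht : ∀ m, t (m + 1) ≤ t m + 1) (v : ℕ) :
    partialSups t (v + 1) ≤ partialSups t v + 1 := by
  rw [partialSups_add_one]
  exact sup_le (by omega) ((ht v).trans (by linarith [le_partialSups t v]))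

variable {p : ℕ} {c : ℤ}

theorem partialSups_add_period (hper : ∀ m, t (m + (p + 1)) = t m + c) (hc : 0 ≤ c) :
    partialSups t (p + 1 + p) = partialSups t p + c := by
  refine le_antisymm (partialSups_le_iff.2 fun m hm => ?_) ?_
  · rcases le_or_gt m p with hmp | hmp
    · linarith [le_partialSups_of_le t hmp]
    · obtain ⟨i, rfl⟩ : ∃ i, m = i + (p + 1) := ⟨m - (p + 1), by omega⟩
      rw [hper]
      linarith [le_partialSups_of_le t (show i ≤ p by omega)]
  · rw [← le_sub_iff_add_le, partialSups_le_iff]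
    intro m hm
    rw [le_sub_iff_add_le, ← hper]
    exact le_partialSups_of_le t (by omega)

theorem forall_sub_le_iff_partialSups_lt {k : ℤ} (hk : 0 ≤ k)
    (hper : ∀ m, t (m + (p + 1)) = t m + (k + 1)) {j : ℕ}
    (hjp : j ≤ p) :
    (∀ m, 1 ≤ m → m < p + 1 → t (j + m) - t j ≤ k) ↔
      partialSups t (j + p) < t (j + p + 1) := by
  have hjn : t (j + p + 1) = t j + (k + 1) := by rw [add_assoc, hper]
  rw [hjn, ← add_assoc, Int.lt_add_one_iff, partialSups_le_iff]
  constructor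
  · intro h m hm
    rcases lt_trichotomy m j with hmj | rfl | hjm
    · have := h (m + (p + 1) - j) (by omega) (by omega)
      rw [show j + (m + (p + 1) - j) = m + (p + 1) by omega, hper] at this
      omega
    · omega
    · have := h (m - j) (by omega) (by omega)
      rw [show j + (m - j) = m by omega] at this
      omega
  · intro h m _ hm
    have := h (j + m) (by omega)
    omega

theorem cycle_lemma (ht : ∀ m, t (m + 1) ≤ t m + 1) (k : ℕ)
    (hper : ∀ m, t (m + (p + 1)) = t m + (k + 1)) :
    #{j ∈ range (p + 1) | ∀ m, 1 ≤ m → m < p + 1 → t (j + m) - t j ≤ k} = k + 1 := by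
  have hrecord : ∀ j ∈ range (p + 1), (∀ m, 1 ≤ m → m < p + 1 → t (j + m) - t j ≤ k) ↔
      partialSups t (j + p) < partialSups t (j + 1 + p) := by
    intro j hj
    rw [forall_sub_le_iff_partialSups_lt (by positivity) hper (Nat.lt_succ_iff.1 (mem_range.1 hj)),
      show j + 1 + p = j + p + 1 by omega, partialSups_add_one, lt_sup_iff, lt_self_iff_false,
      false_or]
  have hcount := card_filter_lt_succ_eq_sub (fun j => partialSups t (j + p))
    (fun j => (partialSups t).monotone (by omega))
    (fun j => by rw [show j + 1 + p = j + p + 1 by omega]; exact partialSups_succ_le_add_one ht _)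
    (p + 1)
  rw [← filter_congr hrecord, partialSups_add_period hper (by positivity), zero_add] at hcount
  omega

end Walk

open scoped Classical in
theorem card_mul_measure_eq_of_card_filter {α ι : Type*} [MeasurableSpace α]
    {π : Measure α} (s : Finset ι) {f : ι → α → α} (hf : ∀ j ∈ s, MeasurePreserving (f j) π π)
    {A B : Set α} (hA : MeasurableSet A) (hB : MeasurableSet B) {c : ℕ}
    (hcount : ∀ᵐ z ∂π, #{j ∈ s | f j z ∈ A} = if z ∈ B then c else 0) :
    #s * π A = c * π B := by
  calc (#s : ℝ≥0∞) * π A = ∑ j ∈ s, π (f j ⁻¹' A) := by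
        rw [sum_congr rfl fun j hj => (hf j hj).measure_preimage hA.nullMeasurableSet,
          sum_const, nsmul_eq_mul]
    _ = ∫⁻ z, ∑ j ∈ s, A.indicator 1 (f j z) ∂π := by
        rw [lintegral_finsetSum (f := fun j z => A.indicator 1 (f j z)) _
          fun j hj => (measurable_one.indicator hA).comp (hf j hj).measurable]
        refine sum_congr rfl fun j hj => ?_
        rw [← lintegral_indicator_one ((hf j hj).measurable hA)]
        rfl
    _ = ∫⁻ z, c * B.indicator 1 z ∂π := by
        refine lintegral_congr_ae (hcount.mono fun z hz => ?_)
        simp only [Set.indicator_apply, Pi.one_apply]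
        rw [← sum_filter, sum_const, nsmul_one, hz]
        split_ifs <;> simp
    _ = c * π B := by
        rw [lintegral_const_mul _ (measurable_one.indicator hB), lintegral_indicator_one hB]

open Fin.NatCast

section CyclicWalk

variable {n : ℕ} [NeZero n]

-- `i : ℕ` is read modulo `n`: this is the walk with `n`-periodic increments `z`.
def cyclicWalk (z : Fin n → ℤ) (m : ℕ) : ℤ := ∑ i ∈ range m, z i

variable (n) in
def endpointSet (c : ℤ) : Set (Fin n → ℤ) := {z | cyclicWalk z n = c}

variable (n) in
def firstPassageSet (k : ℤ) : Set (Fin n → ℤ) :=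
  {z | cyclicWalk z n = k + 1 ∧ ∀ m, 1 ≤ m → m < n → cyclicWalk z m ≤ k}

theorem cyclicWalk_natCast_of_le (f : ℕ → ℤ) {m : ℕ} (hm : m ≤ n) :
    cyclicWalk (fun i : Fin n => f i) m = ∑ i ∈ range m, f i :=
  sum_congr rfl fun i hi => by
    dsimp only
    rw [Fin.val_natCast, Nat.mod_eq_of_lt ((mem_range.1 hi).trans_le hm)]

theorem cyclicWalk_add_one (z : Fin n → ℤ) (m : ℕ) :
    cyclicWalk z (m + 1) = cyclicWalk z m + z m :=
  sum_range_succ _ _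

theorem cyclicWalk_add_one_le (z : Fin n → ℤ) (hz : ∀ i, z i ≤ 1) (m : ℕ) :
    cyclicWalk z (m + 1) ≤ cyclicWalk z m + 1 := by
  rw [cyclicWalk_add_one]
  exact add_le_add_right (hz _) _

theorem cyclicWalk_add_period (z : Fin n → ℤ) (m : ℕ) :
    cyclicWalk z (m + n) = cyclicWalk z m + cyclicWalk z n := by
  induction m with
  | zero => simp [cyclicWalk]
  | succ m ih =>
    rw [show m + 1 + n = m + n + 1 by omega, cyclicWalk_add_one, ih, cyclicWalk_add_one,
      Nat.cast_add, Fin.natCast_self, add_zero]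
    ring

def cyclicShift {α : Type*} (z : Fin n → α) (j : ℕ) : Fin n → α := fun i => z (i + j)

theorem measurePreserving_cyclicShift {α : Type*} [MeasurableSpace α] (μ : Measure α)
    [SigmaFinite μ] (j : ℕ) :
    MeasurePreserving (cyclicShift · j) (Measure.pi fun _ : Fin n => μ) (Measure.pi fun _ => μ) :=
  measurePreserving_arrowCongr' (fun _ => μ) (fun _ => μ) (Equiv.addRight (j : Fin n)).symm
    (MeasurableEquiv.refl α) fun _ => .id μ

theorem cyclicWalk_cyclicShift (z : Fin n → ℤ) (j m : ℕ) :
    cyclicWalk (cyclicShift z j) m = cyclicWalk z (j + m) - cyclicWalk z j := by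
  rw [eq_sub_iff_add_eq', cyclicWalk, cyclicWalk, cyclicWalk, sum_range_add]
  congr 1
  refine sum_congr rfl fun i _ => ?_
  rw [cyclicShift, Nat.cast_add, add_comm]

open scoped Classical in
theorem card_filter_cyclicShift_mem_firstPassageSet (z : Fin n → ℤ) (hz : ∀ i, z i ≤ 1)
    (k : ℕ) :
    #{j ∈ range n | cyclicShift z j ∈ firstPassageSet n k} =
      if z ∈ endpointSet n (k + 1) then k + 1 else 0 := by
  have hend : ∀ j, cyclicWalk (cyclicShift z j) n = cyclicWalk z n := fun j => by
    rw [cyclicWalk_cyclicShift, cyclicWalk_add_period, add_sub_cancel_left]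
  split_ifs with hB
  · obtain ⟨p, rfl⟩ : ∃ p, n = p + 1 := Nat.exists_eq_succ_of_ne_zero (NeZero.ne n)
    rw [← cycle_lemma (cyclicWalk_add_one_le z hz) k fun m => by
      rw [cyclicWalk_add_period, hB.out]]
    congr 1
    ext j
    simp only [mem_filter, firstPassageSet, Set.mem_ofPred_eq, hend, hB.out, true_and,
      cyclicWalk_cyclicShift]
  · rw [card_eq_zero, filter_eq_empty_iff]
    exact fun j _ hA => hB (by rw [endpointSet, Set.mem_ofPred_eq, ← hend j]; exact hA.1)

end CyclicWalk

theorem stmt_5_general {Ω : Type*} [MeasurableSpace Ω] (P : Measure Ω)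
    (μ : Measure ℤ) [IsProbabilityMeasure μ]
    (X : ℕ → Ω → ℤ) (hmeas : ∀ i, Measurable (X i))
    (hlaw : ∀ i, Measure.map (X i) P = μ)
    (hindep : iIndepFun X P)
    (hskipfree : ∀ i ω, X i ω ≤ 1)
    (S : ℕ → Ω → ℤ) (hS : ∀ n ω, S n ω = ∑ i ∈ Finset.range n, X i ω)
    (k : ℕ) (n : ℕ) (hn : k < n) :
    (P {ω | S n ω = (k : ℤ) + 1 ∧ ∀ m, 1 ≤ m → m < n → S m ω ≤ (k : ℤ)}).toReal
      = ((k + 1 : ℝ) / n) * (P {ω | S n ω = (k : ℤ) + 1}).toReal := by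
  have : NeZero n := ⟨by omega⟩
  set Y : Ω → Fin n → ℤ := fun ω i => X i ω
  have hY : Measurable Y := measurable_pi_lambda _ fun i => hmeas i
  have hlawY : P.map Y = Measure.pi fun _ => μ := by
    rw [iIndepFun.map_fun_eq_pi_map (f := fun i : Fin n => X i) (fun i => (hmeas i).aemeasurable)
      (hindep.precomp Fin.val_injective)]
    simp only [hlaw]
  have hwalk : ∀ m ≤ n, ∀ ω, S m ω = cyclicWalk (Y ω) m := fun m hm ω => by
    rw [hS, cyclicWalk_natCast_of_le (X · ω) hm]
  have hfirst : {ω | S n ω = (k : ℤ) + 1 ∧ ∀ m, 1 ≤ m → m < n → S m ω ≤ (k : ℤ)} =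
      Y ⁻¹' firstPassageSet n k := by
    ext ω
    refine and_congr (by rw [hwalk n le_rfl]) (forall_congr' fun m => imp_congr_right fun _ =>
      forall_congr' fun hm => by rw [hwalk m hm.le])
  have hend : {ω | S n ω = (k : ℤ) + 1} = Y ⁻¹' endpointSet n (k + 1) := by
    ext ω
    simp [endpointSet, hwalk]
  have hcycle := card_mul_measure_eq_of_card_filter (π := P.map Y) (range n)
    (fun j _ => hlawY ▸ measurePreserving_cyclicShift μ j) .of_discrete .of_discrete
    ((ae_map_iff hY.aemeasurable .of_discrete).2 (ae_of_all _ fun ω =>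
      card_filter_cyclicShift_mem_firstPassageSet _ (fun i => hskipfree i ω) k))
  rw [Measure.map_apply hY .of_discrete, Measure.map_apply hY .of_discrete, ← hfirst, ← hend,
    card_range] at hcycle
  have := congrArg ENNReal.toReal hcycle
  rw [ENNReal.toReal_mul, ENNReal.toReal_mul, ENNReal.toReal_natCast, ENNReal.toReal_natCast,
    Nat.cast_succ] at this
  rw [div_mul_eq_mul_div, eq_div_iff (by exact_mod_cast NeZero.ne n), mul_comm, this]

theorem stmt_5 {Ω : Type*} [MeasurableSpace Ω] (P : Measure Ω) [IsProbabilityMeasure P]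
    (μ : Measure ℤ) [IsProbabilityMeasure μ]
    (X : ℕ → Ω → ℤ) (hmeas : ∀ i, Measurable (X i))
    (hlaw : ∀ i, Measure.map (X i) P = μ)
    (hindep : iIndepFun X P)
    (hskipfree : ∀ i ω, X i ω ≤ 1)
    (S : ℕ → Ω → ℤ) (hS : ∀ n ω, S n ω = ∑ i ∈ Finset.range n, X i ω)
    (k : ℕ) (n : ℕ) (hn : k < n) :
    (P {ω | S n ω = (k : ℤ) + 1 ∧ ∀ m, 1 ≤ m → m < n → S m ω ≤ (k : ℤ)}).toReal
      = ((k + 1 : ℝ) / n) * (P {ω | S n ω = (k : ℤ) + 1}).toReal :=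
  stmt_5_general P μ X hmeas hlaw hindep hskipfree S hS k n hn
end

section
/- Let A_n = S_1 + ... + S_n be an integrated random walk whose increment law μ satisfies μ((−∞,−ε)) > 0 for some ε > 0, and let T_x = inf{n ≥ 1 : A_n > x}. Then for every x ≥ 0 there exists k (any integer with kε ≥ x) such that (μ((−∞,−ε)))^k · P[T_x > n] ≤ P[T_0 > n] ≤ P[T_x > n] for all n; hence P[T_x > n] ≍ P[T_0 > n]. -/
open MeasureTheory ProbabilityTheory

/-!
If the first `k` increments are all below `-ε`, with `k ε ≥ x`, then `S_k ≤ -x` and `A_m ≤ 0`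
for `m ≤ k`, and for `m = k + j` we get `A_m = A_k + j S_k + A'_j ≤ S_k + A'_j`, where `A'` is
the integrated walk of the increments `X_{k+1}, X_{k+2}, …`. So if `A'` stays below `x` up to
time `n`, then `A` stays below `0` up to time `n`. The two events are independent, the first has
probability `μ((-∞, -ε))^k`, and `A'` has the law of `A`.
-/

namespace ProbabilityTheory

variable {Ω ι κ β : Type*} [mβ : MeasurableSpace β] {X : ι → Ω → β}

lemma comap_reindex_le_iSup_comap (g : κ → ι) :
    MeasurableSpace.pi.comap (fun ω j => X (g j) ω)
      ≤ ⨆ i ∈ Set.range g, mβ.comap (X i) := by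
  simp_rw [MeasurableSpace.pi, MeasurableSpace.comap_iSup, MeasurableSpace.comap_comp]
  exact iSup_le fun j => le_iSup₂_of_le (f := fun i (_ : i ∈ Set.range g) => mβ.comap (X i))
    (g j) ⟨j, rfl⟩ le_rfl

variable [MeasurableSpace Ω] {P : Measure Ω}

lemma iIndepFun.indepFun_reindex_of_disjoint {κ' : Type*} (hmeas : ∀ i, Measurable (X i))
    (hindep : iIndepFun X P) {g : κ → ι} {g' : κ' → ι}
    (hg : Disjoint (Set.range g) (Set.range g')) :
    IndepFun (fun ω j => X (g j) ω) (fun ω j => X (g' j) ω) P := by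
  rw [IndepFun_iff_Indep]
  exact indep_of_indep_of_le_right (indep_of_indep_of_le_left
    (indep_iSup_of_disjoint (fun i => (hmeas i).comap_le) hindep hg)
    (comap_reindex_le_iSup_comap g)) (comap_reindex_le_iSup_comap g')

lemma iIndepFun.map_reindex_eq_infinitePi {μ : Measure β} [IsProbabilityMeasure μ]
    (hmeas : ∀ i, Measurable (X i)) (hlaw : ∀ i, P.map (X i) = μ) (hindep : iIndepFun X P)
    {g : κ → ι} (hg : g.Injective) :
    P.map (fun ω j => X (g j) ω) = Measure.infinitePi (fun _ => μ) := by
  rw [(hindep.precomp hg).map_fun_eq_infinitePi_map fun j => hmeas (g j)]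
  simp only [hlaw]

lemma iIndepFun.measure_forall_fin_mem {X : ℕ → Ω → β} {μ : Measure β}
    [IsProbabilityMeasure μ]
    (hmeas : ∀ i, Measurable (X i)) (hlaw : ∀ i, P.map (X i) = μ) (hindep : iIndepFun X P)
    (k : ℕ) {s : Set β} (hs : MeasurableSet s) :
    P ((fun ω (i : Fin k) => X i ω) ⁻¹' Set.univ.pi fun _ => s) = μ s ^ k := by
  rw [← Measure.map_apply (measurable_pi_iff.mpr fun i : Fin k => hmeas i) (.univ_pi fun _ => hs),
    hindep.map_reindex_eq_infinitePi hmeas hlaw Fin.val_injective, Measure.infinitePi_eq_pi,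
    Measure.pi_pi, Finset.prod_const, Finset.card_univ, Fintype.card_fin]

lemma iIndepFun.measure_shift_preimage {X : ℕ → Ω → β} {μ : Measure β}
    [IsProbabilityMeasure μ]
    (hmeas : ∀ i, Measurable (X i)) (hlaw : ∀ i, P.map (X i) = μ) (hindep : iIndepFun X P)
    (k : ℕ) {E : Set (ℕ → β)} (hE : MeasurableSet E) :
    P ((fun ω i => X (k + i) ω) ⁻¹' E) = P ((fun ω i => X i ω) ⁻¹' E) := by
  rw [← Measure.map_apply (measurable_pi_iff.mpr fun i => hmeas _) hE,
    ← Measure.map_apply (measurable_pi_iff.mpr hmeas) hE,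
    hindep.map_reindex_eq_infinitePi hmeas hlaw (add_right_injective k),
    hindep.map_fun_eq_infinitePi_map hmeas]
  simp only [hlaw]

end ProbabilityTheory

noncomputable def intWalk (f : ℕ → ℝ) (m : ℕ) : ℝ :=
  ∑ t ∈ Finset.Icc 1 m, ∑ i ∈ Finset.range t, f i

/-- For the walk with increments `f`, this is the event `T_x > n`. -/
def staysBelow (x : ℝ) (n : ℕ) : Set (ℕ → ℝ) :=
  {f | ∀ m, 1 ≤ m → m ≤ n → intWalk f m ≤ x}

lemma intWalk_succ (f : ℕ → ℝ) (m : ℕ) :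
    intWalk f (m + 1) = intWalk f m + ∑ i ∈ Finset.range (m + 1), f i :=
  Finset.sum_Icc_succ_top (by omega) _

lemma intWalk_add (f : ℕ → ℝ) (k j : ℕ) :
    intWalk f (k + j) =
      intWalk f k + j * ∑ i ∈ Finset.range k, f i + intWalk (fun i => f (k + i)) j := by
  induction j with
  | zero => simp [intWalk]
  | succ j ih =>
    have hsum : ∑ i ∈ Finset.range (k + j + 1), f i =
        ∑ i ∈ Finset.range k, f i + ∑ i ∈ Finset.range (j + 1), f (k + i) := by
      rw [add_assoc, Finset.sum_range_add]
    rw [← add_assoc, intWalk_succ, ih, intWalk_succ, hsum]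
    push_cast
    ring

lemma intWalk_nonpos {f : ℕ → ℝ} {k m : ℕ} (hf : ∀ i < k, f i ≤ 0) (hm : m ≤ k) :
    intWalk f m ≤ 0 :=
  Finset.sum_nonpos fun t ht => Finset.sum_nonpos fun i hi => hf i <| by
    simp only [Finset.mem_Icc, Finset.mem_range] at ht hi; omega

lemma mem_staysBelow_zero_of_shift {f : ℕ → ℝ} {k n : ℕ} {x : ℝ}
    (hf : ∀ i < k, f i ≤ 0)
    (hk : x ≤ -∑ i ∈ Finset.range k, f i) (hshift : (fun i => f (k + i)) ∈ staysBelow x n) :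
    f ∈ staysBelow 0 n := by
  intro m hm1 hmn
  rcases le_or_gt m k with hmk | hkm
  · exact intWalk_nonpos hf hmk
  obtain ⟨j, rfl⟩ := Nat.exists_eq_add_of_lt hkm
  have hS : ∑ i ∈ Finset.range k, f i ≤ 0 :=
    Finset.sum_nonpos fun i hi => hf i (Finset.mem_range.mp hi)
  have hj : (1 : ℝ) ≤ (j + 1 : ℕ) := by exact_mod_cast Nat.le_add_left 1 j
  rw [add_assoc, intWalk_add]
  nlinarith [intWalk_nonpos hf le_rfl, hshift (j + 1) (by omega) (by omega)]

lemma staysBelow_mono {x y : ℝ} (hxy : x ≤ y) (n : ℕ) : staysBelow x n ⊆ staysBelow y n :=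
  fun _ hf m hm1 hmn => (hf m hm1 hmn).trans hxy

lemma measurableSet_staysBelow (x : ℝ) (n : ℕ) : MeasurableSet (staysBelow x n) := by
  simp only [staysBelow, Set.ofPred_forall]
  refine .iInter fun m => .iInter fun _ => .iInter fun _ => ?_
  exact measurableSet_le (by unfold intWalk; fun_prop) measurable_const

lemma disjoint_range_val_range_add (k : ℕ) :
    Disjoint (Set.range (Fin.val : Fin k → ℕ)) (Set.range (k + ·)) := by
  refine Set.disjoint_left.mpr ?_
  rintro _ ⟨i, rfl⟩ ⟨j, hj⟩
  simp only at hj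
  omega

theorem stmt_8_general {Ω : Type*} [MeasurableSpace Ω] (P : Measure Ω) [IsProbabilityMeasure P]
    (μ : Measure ℝ) [IsProbabilityMeasure μ]
    (X : ℕ → Ω → ℝ) (hmeas : ∀ i, Measurable (X i))
    (hlaw : ∀ i, Measure.map (X i) P = μ)
    (hindep : iIndepFun X P)
    (S : ℕ → Ω → ℝ) (hS : ∀ n ω, S n ω = ∑ i ∈ Finset.range n, X i ω)
    (A : ℕ → Ω → ℝ) (hA : ∀ n ω, A n ω = ∑ k ∈ Finset.Icc 1 n, S k ω)
    (ε : ℝ) (hε : 0 < ε)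
    (x : ℝ) (hx : 0 ≤ x) :
    ∃ k : ℕ, x ≤ k * ε ∧ ∀ n : ℕ,
      (μ (Set.Iio (-ε))) ^ k * P {ω | ∀ m, 1 ≤ m → m ≤ n → A m ω ≤ x}
          ≤ P {ω | ∀ m, 1 ≤ m → m ≤ n → A m ω ≤ 0}
      ∧ P {ω | ∀ m, 1 ≤ m → m ≤ n → A m ω ≤ 0}
          ≤ P {ω | ∀ m, 1 ≤ m → m ≤ n → A m ω ≤ x} := by
  set k := ⌈x / ε⌉₊
  have hkε : x ≤ k * ε := (div_le_iff₀ hε).mp (Nat.le_ceil _)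
  refine ⟨k, hkε, fun n => ?_⟩
  have hevent (y : ℝ) : {ω | ∀ m, 1 ≤ m → m ≤ n → A m ω ≤ y}
      = (fun ω i => X i ω) ⁻¹' staysBelow y n := by
    ext ω
    simp [staysBelow, intWalk, hA, hS]
  rw [hevent, hevent]
  refine ⟨?_, measure_mono (Set.preimage_mono (staysBelow_mono hx n))⟩
  set B := (fun ω (i : Fin k) => X i ω) ⁻¹' Set.univ.pi fun _ => Set.Iio (-ε)
  have hincl : B ∩ (fun ω i => X (k + i) ω) ⁻¹' staysBelow x n
      ⊆ (fun ω i => X i ω) ⁻¹' staysBelow 0 n := by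
    rintro ω ⟨hωB, hωC⟩
    have hneg (i : ℕ) (hi : i < k) : X i ω ≤ -ε := (hωB ⟨i, hi⟩ trivial).le
    refine mem_staysBelow_zero_of_shift (fun i hi => (hneg i hi).trans (by linarith)) ?_ hωC
    calc x ≤ k * ε := hkε
      _ = -∑ i ∈ Finset.range k, -ε := by simp
      _ ≤ -∑ i ∈ Finset.range k, X i ω :=
        neg_le_neg (Finset.sum_le_sum fun i hi => hneg i (Finset.mem_range.mp hi))
  calc μ (Set.Iio (-ε)) ^ k * P ((fun ω i => X i ω) ⁻¹' staysBelow x n)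
      = P B * P ((fun ω i => X (k + i) ω) ⁻¹' staysBelow x n) := by
        rw [hindep.measure_forall_fin_mem hmeas hlaw k measurableSet_Iio,
          hindep.measure_shift_preimage hmeas hlaw k (measurableSet_staysBelow x n)]
    _ = P (B ∩ (fun ω i => X (k + i) ω) ⁻¹' staysBelow x n) :=
        ((hindep.indepFun_reindex_of_disjoint hmeas (disjoint_range_val_range_add k))
          |>.measure_inter_preimage_eq_mul _ _ (.univ_pi fun _ => measurableSet_Iio)
            (measurableSet_staysBelow x n)).symm
    _ ≤ _ := measure_mono hincl

theorem stmt_8 {Ω : Type*} [MeasurableSpace Ω] (P : Measure Ω) [IsProbabilityMeasure P]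
    (μ : Measure ℝ) [IsProbabilityMeasure μ]
    (X : ℕ → Ω → ℝ) (hmeas : ∀ i, Measurable (X i))
    (hlaw : ∀ i, Measure.map (X i) P = μ)
    (hindep : iIndepFun X P)
    (S : ℕ → Ω → ℝ) (hS : ∀ n ω, S n ω = ∑ i ∈ Finset.range n, X i ω)
    (A : ℕ → Ω → ℝ) (hA : ∀ n ω, A n ω = ∑ k ∈ Finset.Icc 1 n, S k ω)
    (ε : ℝ) (hε : 0 < ε) (hneg : 0 < μ (Set.Iio (-ε)))
    (x : ℝ) (hx : 0 ≤ x) :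
    ∃ k : ℕ, x ≤ k * ε ∧ ∀ n : ℕ,
      (μ (Set.Iio (-ε))) ^ k * P {ω | ∀ m, 1 ≤ m → m ≤ n → A m ω ≤ x}
          ≤ P {ω | ∀ m, 1 ≤ m → m ≤ n → A m ω ≤ 0}
      ∧ P {ω | ∀ m, 1 ≤ m → m ≤ n → A m ω ≤ 0}
          ≤ P {ω | ∀ m, 1 ≤ m → m ≤ n → A m ω ≤ x} :=
  stmt_8_general P μ X hmeas hlaw hindep S hS A hA ε hε x hx
end

section
/- For every H ∈ (0,1] and t ≥ 0, the correlation function C_H(t) = 2H e^{−Ht} ∫_0^1 (u(u + e^t − 1))^{H−1/2} du of the Lamperti transform of the Riemann–Liouville process of order H − 1/2 satisfies the inequality C_H(t) ≤ cosh(Ht) − 2^{2H−1} (sinh(t/2))^{2H}, i.e., it is dominated by the correlation function of the Lamperti transform of fractional Brownian motion with the same Hurst index, with equality when H = 1/2. -/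
open MeasureTheory

/-!
Write `a = eᵗ - 1`. By AM-GM, `(u (u + a))^(H - 1/2) ≤ (u^(2H-1) + (u + a)^(2H-1)) / 2`, and the right-hand
side integrates over `[0, 1]` to `(1 + (1 + a)^(2H) - a^(2H)) / (4H)`. After the factor `2H e^{-Ht}`
this is exactly `e^{-Ht} E[B_1 B_{eᵗ}] = e^{-Ht} (1 + e^{2Ht} - (eᵗ - 1)^(2H)) / 2`, the fractional
Brownian covariance, which equals `cosh (H t) - 2^(2H-1) sinh (t/2)^(2H)`. For `H = 1/2` both
integrands are constant and AM-GM is an equality.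
-/

namespace Real

theorem mul_rpow_le_rpow_two_mul_add_rpow_two_mul {x y : ℝ} (hx : 0 ≤ x) (hy : 0 ≤ y) (r : ℝ) :
    (x * y) ^ r ≤ (x ^ (2 * r) + y ^ (2 * r)) / 2 := by
  have hsq : ∀ {z : ℝ}, 0 ≤ z → z ^ (2 * r) = (z ^ r) ^ 2 := fun hz => by
    rw [mul_comm, rpow_mul hz, rpow_two]
  rw [mul_rpow hx hy, hsq hx, hsq hy]
  linarith [two_mul_le_add_sq (x ^ r) (y ^ r)]

theorem integral_rpow_add_const {a s : ℝ} (hs : -1 < s) :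
    ∫ u in (0 : ℝ)..1, (u + a) ^ s = ((1 + a) ^ (s + 1) - a ^ (s + 1)) / (s + 1) := by
  rw [intervalIntegral.integral_comp_add_right (fun u => u ^ s) a, integral_rpow (Or.inl hs),
    zero_add]

theorem two_mul_integral_rpow_mul_add_le {H a : ℝ} (hH : 0 < H) (ha : 0 ≤ a) :
    2 * H * ∫ u in (0 : ℝ)..1, (u * (u + a)) ^ (H - 1/2)
      ≤ (1 + (1 + a) ^ (2 * H) - a ^ (2 * H)) / 2 := by
  have hs : -1 < 2 * H - 1 := by linarith
  have hs' : 2 * H - 1 + 1 = 2 * H := by ring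
  have hexp : 2 * (H - 1/2) = 2 * H - 1 := by ring
  have hint₁ : IntervalIntegrable (fun u : ℝ => u ^ (2 * H - 1)) volume 0 1 :=
    intervalIntegral.intervalIntegrable_rpow' hs
  have hint₂ : IntervalIntegrable (fun u : ℝ => (u + a) ^ (2 * H - 1)) volume 0 1 := by
    simpa using (intervalIntegral.intervalIntegrable_rpow' hs (a := a) (b := 1 + a)).comp_add_right a
  have hamgm : ∫ u in (0 : ℝ)..1, (u * (u + a)) ^ (H - 1/2)
      ≤ ∫ u in (0 : ℝ)..1, (u ^ (2 * H - 1) + (u + a) ^ (2 * H - 1)) / 2 := by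
    rw [intervalIntegral.integral_of_le zero_le_one, intervalIntegral.integral_of_le zero_le_one]
    refine integral_mono_of_nonneg ?_ ((hint₁.add hint₂).div_const 2).1 ?_ <;>
      filter_upwards [ae_restrict_mem measurableSet_Ioc] with u hu
    · exact rpow_nonneg (mul_nonneg hu.1.le (by linarith [hu.1])) _
    · simpa only [hexp] using
        mul_rpow_le_rpow_two_mul_add_rpow_two_mul hu.1.le (by linarith [hu.1]) (H - 1/2)
  have hbound : ∫ u in (0 : ℝ)..1, (u ^ (2 * H - 1) + (u + a) ^ (2 * H - 1)) / 2
      = (1 + (1 + a) ^ (2 * H) - a ^ (2 * H)) / (4 * H) := by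
    rw [intervalIntegral.integral_div, intervalIntegral.integral_add hint₁ hint₂,
      integral_rpow (Or.inl hs), integral_rpow_add_const hs, hs', one_rpow,
      zero_rpow (by positivity)]
    field_simp
    ring
  calc 2 * H * ∫ u in (0 : ℝ)..1, (u * (u + a)) ^ (H - 1/2)
      ≤ 2 * H * ((1 + (1 + a) ^ (2 * H) - a ^ (2 * H)) / (4 * H)) :=
        mul_le_mul_of_nonneg_left (hamgm.trans_eq hbound) (by positivity)
    _ = (1 + (1 + a) ^ (2 * H) - a ^ (2 * H)) / 2 := by field_simp; ring

theorem cosh_mul_sub_two_rpow_mul_sinh_half_rpow {t : ℝ} (ht : 0 ≤ t) (H : ℝ) :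
    cosh (H * t) - 2 ^ (2 * H - 1) * sinh (t / 2) ^ (2 * H)
      = exp (-(H * t)) * (1 + exp t ^ (2 * H) - (exp t - 1) ^ (2 * H)) / 2 := by
  have hsinh : sinh (t / 2) = (exp t - 1) / 2 * exp (-(t / 2)) := by
    rw [sinh_eq]
    have : exp t * exp (-(t / 2)) = exp (t / 2) := by rw [← exp_add]; ring_nf
    linear_combination (-1 / 2 : ℝ) * this
  have ha : 0 ≤ exp t - 1 := by linarith [one_le_exp ht]
  have hsinh_rpow : 2 ^ (2 * H - 1) * sinh (t / 2) ^ (2 * H)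
      = (exp t - 1) ^ (2 * H) * exp (-(H * t)) / 2 := by
    rw [hsinh, mul_rpow (by positivity) (exp_pos _).le, div_rpow ha zero_le_two, ← exp_mul,
      rpow_sub zero_lt_two, rpow_one, show -(t / 2) * (2 * H) = -(H * t) by ring]
    have : (2 : ℝ) ^ (2 * H) ≠ 0 := by positivity
    field_simp
  have hcosh : exp (-(H * t)) * exp t ^ (2 * H) = exp (H * t) := by
    rw [← exp_mul, ← exp_add]; ring_nf
  rw [cosh_eq, hsinh_rpow]
  linear_combination (-1 / 2 : ℝ) * hcosh

end Real

theorem stmt_16 (H t : ℝ) (hH : H ∈ Set.Ioc (0 : ℝ) 1) (ht : 0 ≤ t) :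
    2 * H * Real.exp (-(H * t)) * ∫ u in (0:ℝ)..1, (u * (u + Real.exp t - 1)) ^ (H - 1/2)
      ≤ Real.cosh (H * t) - 2 ^ (2 * H - 1) * Real.sinh (t / 2) ^ (2 * H)
    ∧ (H = 1/2 →
      2 * H * Real.exp (-(H * t)) * ∫ u in (0:ℝ)..1, (u * (u + Real.exp t - 1)) ^ (H - 1/2)
        = Real.cosh (H * t) - 2 ^ (2 * H - 1) * Real.sinh (t / 2) ^ (2 * H)) := by
  refine ⟨?_, fun hH_half => ?_⟩
  · have ha : 0 ≤ Real.exp t - 1 := by linarith [Real.one_le_exp ht]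
    have hbound := Real.two_mul_integral_rpow_mul_add_le hH.1 ha
    simp only [add_sub_cancel, ← add_sub_assoc] at hbound
    rw [Real.cosh_mul_sub_two_rpow_mul_sinh_half_rpow ht, mul_comm (2 * H), mul_assoc, mul_div_assoc]
    exact mul_le_mul_of_nonneg_left hbound (Real.exp_pos _).le
  · subst hH_half
    norm_num [show (1 : ℝ) / 2 * t = t / 2 by ring]
end

section
/- The correlation function C_H(t) = 2H e^{−Ht} ∫_0^1 (u(u + e^t − 1))^{H−1/2} du admits for H ∈ (0,1) the first-order expansion at zero C_H(t) = 1 − (Γ(1−H) Γ(1/2 + H)/√π) (t/2)^{2H} + o(t^{2H}) as t → 0+. -/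
/-!
Put `a = (eᵗ - 1) / 2` and `P u = u (u + 2a)`. The function `F u = P u ^ (H + 1/2) / (u + a)`
has `F' = 2H P ^ (H - 1/2) + a² P ^ (H - 1/2) / (u + a)²`, and the substitution `u = a (r - 1)`
turns the last term into `a ^ (2H)` times the kernel `(r² - 1) ^ (H - 1/2) / r²`. With
`a = e^{t/2} sinh (t/2)` and `1 + a = e^{t/2} cosh (t/2)` this gives the exact formula

  `C_H t = 1 / cosh (t/2) - sinh (t/2) ^ (2H) ∫_1^{coth (t/2)} (r² - 1) ^ (H - 1/2) / r² dr`.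

As `t → 0+`, `1 / cosh (t/2) = 1 + O(t²)`, `sinh (t/2) ~ t/2` and `coth (t/2) → ∞`, while the
substitution `v = r⁻²` identifies the full integral with
`B(1 - H, H + 1/2) / 2 = Γ(1 - H) Γ(1/2 + H) / √π`.
-/

open MeasureTheory Filter Asymptotics Set
open scoped Topology

theorem Real.Gamma_mul_Gamma_eq_integral_beta {x y : ℝ} (hx : 0 < x) (hy : 0 < y) :
    Real.Gamma x * Real.Gamma y =
      Real.Gamma (x + y) * ∫ v in (0:ℝ)..1, v ^ (x - 1) * (1 - v) ^ (y - 1) := by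
  have hB : Complex.betaIntegral x y
      = ↑(∫ v in (0:ℝ)..1, v ^ (x - 1) * (1 - v) ^ (y - 1)) := by
    rw [Complex.betaIntegral, ← intervalIntegral.integral_ofReal]
    refine intervalIntegral.integral_congr fun v hv => ?_
    rw [uIcc_of_le zero_le_one] at hv
    push_cast [Complex.ofReal_cpow hv.1, Complex.ofReal_cpow (sub_nonneg.2 hv.2)]
    rfl
  have h := Complex.Gamma_mul_Gamma_eq_betaIntegral (s := x) (t := y) (by simpa) (by simpa)
  rw [hB, ← Complex.ofReal_add, Complex.Gamma_ofReal, Complex.Gamma_ofReal,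
    Complex.Gamma_ofReal] at h
  exact_mod_cast h

/-- Under `v = r⁻²` this becomes half the Beta integrand `v ^ (-H) * (1 - v) ^ (H - 1/2)`. -/
noncomputable def betaKernel (H r : ℝ) : ℝ := (r ^ 2 - 1) ^ (H - 1/2) / r ^ 2

theorem rpow_neg_three_mul_betaIntegrand_rpow_neg_two {H x : ℝ} (hx : 1 < x) :
    x ^ (-3 : ℝ) * ((x ^ (-2 : ℝ)) ^ (-H) * (1 - x ^ (-2 : ℝ)) ^ (H - 1/2))
      = betaKernel H x := by
  have hx0 : 0 < x := by linarith
  have h1 : 1 - x ^ (-2 : ℝ) = (x ^ 2 - 1) * x ^ (-2 : ℝ) := by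
    rw [Real.rpow_neg hx0.le, Real.rpow_two]; field_simp
  have h2 : x ^ (-3 : ℝ) * x ^ (-2 * -H) * x ^ (-2 * (H - 1/2)) = (x ^ 2)⁻¹ := by
    rw [← Real.rpow_add hx0, ← Real.rpow_add hx0, ← Real.rpow_two, ← Real.rpow_neg hx0.le]
    ring_nf
  rw [h1, Real.mul_rpow (by nlinarith) (by positivity), ← Real.rpow_mul hx0.le,
    ← Real.rpow_mul hx0.le, betaKernel, div_eq_mul_inv (b := x ^ 2), ← h2]
  ring

theorem integral_betaKernel_eq_half_integral (H : ℝ) :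
    ∫ r in Ioi 1, betaKernel H r = (∫ v in (0:ℝ)..1, v ^ (-H) * (1 - v) ^ (H - 1/2)) / 2 := by
  have hsub := integral_comp_rpow_Ioi
    ((Ioo (0:ℝ) 1).indicator fun v => v ^ (-H) * (1 - v) ^ (H - 1/2)) (p := -2) (by norm_num)
  have hL : EqOn (fun x : ℝ => (|(-2:ℝ)| * x ^ ((-2:ℝ) - 1)) •
      (Ioo (0:ℝ) 1).indicator (fun v => v ^ (-H) * (1 - v) ^ (H - 1/2)) (x ^ (-2:ℝ)))
      ((Ioi 1).indicator fun x => 2 * betaKernel H x) (Ioi 0) := by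
    intro x (hx : 0 < x)
    rcases le_or_gt x 1 with hle | hgt
    · have : 1 ≤ x ^ (-2 : ℝ) :=
        Real.one_le_rpow_of_pos_of_le_one_of_nonpos hx hle (by norm_num)
      dsimp only
      rw [indicator_of_notMem (show x ^ (-2:ℝ) ∉ Ioo 0 1 from fun h => h.2.not_ge this),
        indicator_of_notMem (show x ∉ Ioi 1 from hle.not_gt), smul_zero]
    · have hmem : x ^ (-2 : ℝ) ∈ Ioo 0 1 :=
        ⟨by positivity, Real.rpow_lt_one_of_one_lt_of_neg hgt (by norm_num)⟩
      dsimp only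
      rw [indicator_of_mem hmem, indicator_of_mem (show x ∈ Ioi 1 from hgt), smul_eq_mul,
        ← rpow_neg_three_mul_betaIntegrand_rpow_neg_two hgt,
        show |(-2:ℝ)| = 2 by norm_num, show (-2:ℝ) - 1 = -3 by norm_num]
      ring
  rw [setIntegral_congr_fun measurableSet_Ioi hL, setIntegral_indicator measurableSet_Ioi,
    inter_eq_right.2 (Ioi_subset_Ioi zero_le_one), integral_const_mul,
    setIntegral_indicator measurableSet_Ioo, inter_eq_right.2 Ioo_subset_Ioi_self,
    ← integral_Ioc_eq_integral_Ioo, ← intervalIntegral.integral_of_le zero_le_one] at hsub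
  rw [← hsub]
  ring

theorem integral_betaKernel {H : ℝ} (h0 : 0 < H) (h1 : H < 1) :
    ∫ r in Ioi 1, betaKernel H r
      = Real.Gamma (1 - H) * Real.Gamma (1/2 + H) / Real.sqrt Real.pi := by
  have hB := Real.Gamma_mul_Gamma_eq_integral_beta (x := 1 - H) (y := 1/2 + H)
    (by linarith) (by linarith)
  have hG : Real.Gamma (1 - H + (1/2 + H)) = Real.sqrt Real.pi / 2 := by
    rw [show 1 - H + (1/2 + H) = 1/2 + 1 by ring, Real.Gamma_add_one (by norm_num),
      Real.Gamma_one_half_eq]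
    ring
  rw [hG, show 1 - H - 1 = -H by ring, show 1/2 + H - 1 = H - 1/2 by ring] at hB
  rw [integral_betaKernel_eq_half_integral, eq_div_iff (by positivity), hB]
  ring

theorem integrableOn_betaKernel {H : ℝ} (h0 : 0 < H) (h1 : H < 1) :
    IntegrableOn (betaKernel H) (Ioi 1) := by
  -- `integral_betaKernel` needs no integrability hypothesis, and its value is nonzero.
  refine Integrable.of_integral_ne_zero ?_
  rw [integral_betaKernel h0 h1]
  have := Real.Gamma_pos_of_pos (show 0 < 1 - H by linarith)
  have := Real.Gamma_pos_of_pos (show 0 < 1/2 + H by linarith)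
  have := Real.sqrt_pos.2 Real.pi_pos
  positivity

theorem tendsto_integral_betaKernel {H : ℝ} (h0 : 0 < H) (h1 : H < 1) :
    Tendsto (fun R => ∫ r in (1:ℝ)..R, betaKernel H r) atTop
      (𝓝 (Real.Gamma (1 - H) * Real.Gamma (1/2 + H) / Real.sqrt Real.pi)) := by
  rw [← integral_betaKernel h0 h1]
  exact intervalIntegral_tendsto_integral_Ioi 1 (integrableOn_betaKernel h0 h1) tendsto_id

theorem intervalIntegrable_rpow_mul_add {a b q : ℝ} (ha : 0 < a) (hb : 0 ≤ b) (hq : -1 < q) :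
    IntervalIntegrable (fun u => (u * (u + a)) ^ q) volume 0 b := by
  have hcont : ContinuousOn (fun u : ℝ => (u + a) ^ q) (uIcc 0 b) := by
    refine ContinuousOn.rpow_const (by fun_prop) fun u hu => Or.inl ?_
    rw [uIcc_of_le hb] at hu
    linarith [hu.1]
  refine ((intervalIntegral.intervalIntegrable_rpow' hq).mul_continuousOn hcont).congr
    fun u hu => ?_
  rw [uIoc_of_le hb] at hu
  exact (Real.mul_rpow hu.1.le (by linarith [hu.1])).symm

theorem hasDerivAt_rpow_mul_add_div {a H u : ℝ} (ha : 0 ≤ a) (hu : 0 < u) :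
    HasDerivAt (fun u => (u * (u + 2 * a)) ^ (H + 1/2) / (u + a))
      ((u * (u + 2 * a)) ^ (H - 1/2) * (2 * H + a ^ 2 / (u + a) ^ 2)) u := by
  have hP : 0 < u * (u + 2 * a) := by positivity
  have hua : u + a ≠ 0 := by positivity
  have hd := (((hasDerivAt_id' u).mul ((hasDerivAt_id' u).add_const (2 * a))).rpow_const
    (p := H + 1/2) (Or.inl hP.ne')).div ((hasDerivAt_id' u).add_const a) hua
  refine hd.congr_deriv ?_
  simp only [Pi.mul_apply]
  rw [show H + 1/2 - 1 = H - 1/2 by ring, show H + 1/2 = (H - 1/2) + 1 by ring,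
    Real.rpow_add_one hP.ne']
  field_simp
  ring

theorem integral_rpow_mul_add_div_sq {a b H : ℝ} (ha : 0 < a) (hb : 0 ≤ b) :
    ∫ u in (0:ℝ)..b, (u * (u + 2 * a)) ^ (H - 1/2) * (a ^ 2 / (u + a) ^ 2)
      = a ^ (2 * H) * ∫ r in (1:ℝ)..((b + a) / a), betaKernel H r := by
  have hsub := intervalIntegral.integral_comp_mul_sub (a := 1) (b := (b + a) / a)
    (fun u => (u * (u + 2 * a)) ^ (H - 1/2) * (a ^ 2 / (u + a) ^ 2)) ha.ne' a
  rw [mul_one, sub_self, mul_div_cancel₀ _ ha.ne', add_sub_cancel_right] at hsub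
  have hR : 1 ≤ (b + a) / a := by rw [le_div_iff₀ ha]; linarith
  have hpt : ∀ r ∈ uIcc 1 ((b + a) / a),
      ((a * r - a) * (a * r - a + 2 * a)) ^ (H - 1/2) * (a ^ 2 / (a * r - a + a) ^ 2)
        = a ^ (2 * H - 1) * betaKernel H r := by
    intro r hr
    rw [uIcc_of_le hR] at hr
    have hr1 : 0 ≤ r ^ 2 - 1 := by nlinarith [hr.1]
    have ha2 : (a ^ 2) ^ (H - 1/2) = a ^ (2 * H - 1) := by
      rw [← Real.rpow_natCast, ← Real.rpow_mul ha.le]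
      ring_nf
    rw [show (a * r - a) * (a * r - a + 2 * a) = a ^ 2 * (r ^ 2 - 1) by ring,
      Real.mul_rpow (by positivity) hr1, ha2, betaKernel]
    have : a * r ≠ 0 := by nlinarith [hr.1]
    field_simp
    ring
  rw [intervalIntegral.integral_congr hpt, intervalIntegral.integral_const_mul, smul_eq_mul,
    eq_inv_mul_iff_mul_eq₀ ha.ne'] at hsub
  have ha2H : a ^ (2 * H) = a ^ (2 * H - 1) * a := by
    rw [← Real.rpow_add_one ha.ne']
    ring_nf
  rw [← hsub, ha2H]
  ring

theorem integral_rpow_mul_add {a b H : ℝ} (ha : 0 < a) (hb : 0 ≤ b) (hH : 0 < H) :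
    2 * H * ∫ u in (0:ℝ)..b, (u * (u + 2 * a)) ^ (H - 1/2)
      = (b * (b + 2 * a)) ^ (H + 1/2) / (b + a)
        - a ^ (2 * H) * ∫ r in (1:ℝ)..((b + a) / a), betaKernel H r := by
  have hP : IntervalIntegrable (fun u => (u * (u + 2 * a)) ^ (H - 1/2)) volume 0 b :=
    intervalIntegrable_rpow_mul_add (by positivity) hb (by linarith)
  have hw : ContinuousOn (fun u : ℝ => a ^ 2 / (u + a) ^ 2) (uIcc 0 b) := by
    refine ContinuousOn.div (by fun_prop) (by fun_prop) fun u hu => ?_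
    rw [uIcc_of_le hb] at hu
    have := hu.1
    positivity
  have hF : ContinuousOn (fun u : ℝ => (u * (u + 2 * a)) ^ (H + 1/2) / (u + a)) (Icc 0 b) := by
    refine ContinuousOn.div
      (ContinuousOn.rpow_const (by fun_prop) fun u _ => Or.inr (by linarith)) (by fun_prop)
      fun u hu => ?_
    have := hu.1
    positivity
  have hftc := intervalIntegral.integral_eq_sub_of_hasDerivAt_of_le hb hF
    (fun u hu => hasDerivAt_rpow_mul_add_div (H := H) ha.le hu.1)
    (hP.mul_continuousOn (hw.const_add (2 * H)))
  have hsplit :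
      ∫ u in (0:ℝ)..b, (u * (u + 2 * a)) ^ (H - 1/2) * (2 * H + a ^ 2 / (u + a) ^ 2)
        = 2 * H * (∫ u in (0:ℝ)..b, (u * (u + 2 * a)) ^ (H - 1/2))
          + ∫ u in (0:ℝ)..b, (u * (u + 2 * a)) ^ (H - 1/2) * (a ^ 2 / (u + a) ^ 2) := by
    rw [← intervalIntegral.integral_const_mul,
      ← intervalIntegral.integral_add (hP.const_mul _) (hP.mul_continuousOn hw)]
    exact intervalIntegral.integral_congr fun u _ => by ring
  rw [hsplit, integral_rpow_mul_add_div_sq ha hb, zero_mul,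
    Real.zero_rpow (by linarith), zero_div, sub_zero] at hftc
  linarith

theorem correlation_eq_hyperbolic {H t : ℝ} (hH : 0 < H) (ht : 0 < t) :
    2 * H * Real.exp (-(H * t)) * ∫ u in (0:ℝ)..1, (u * (u + Real.exp t - 1)) ^ (H - 1/2)
      = (Real.cosh (t / 2))⁻¹ - Real.sinh (t / 2) ^ (2 * H)
          * ∫ r in (1:ℝ)..(Real.cosh (t / 2) / Real.sinh (t / 2)), betaKernel H r := by
  set x := t / 2
  have htx : t = 2 * x := by ring
  have hs : 0 < Real.sinh x := Real.sinh_pos_iff.2 (by positivity)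
  have hex : 0 < Real.exp x := Real.exp_pos x
  have ha : 0 < Real.exp x * Real.sinh x := by positivity
  have h2a : ∀ u, u + Real.exp t - 1 = u + 2 * (Real.exp x * Real.sinh x) := fun u => by
    rw [Real.sinh_eq, htx, mul_comm 2 x, Real.exp_mul, Real.exp_neg, Real.rpow_two]
    field_simp
    ring
  have h1a : 1 + Real.exp x * Real.sinh x = Real.exp x * Real.cosh x := by
    rw [Real.sinh_eq, Real.cosh_eq, Real.exp_neg]
    field_simp
    ring
  have key := integral_rpow_mul_add (b := 1) ha zero_le_one hH
  rw [one_mul, ← h2a, add_sub_cancel_left, h1a, mul_div_mul_left _ _ hex.ne',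
    Real.mul_rpow hex.le hs.le] at key
  simp_rw [h2a]
  have hexp1 : Real.exp (x * (2 * H)) * Real.exp (-(H * t)) = 1 := by
    rw [← Real.exp_add, htx, ← Real.exp_zero]; ring_nf
  have hexp2 : Real.exp (t * (H + 1/2)) * Real.exp (-(H * t)) / (Real.exp x * Real.cosh x)
      = (Real.cosh x)⁻¹ := by
    rw [← Real.exp_add, show t * (H + 1/2) + -(H * t) = x by rw [htx]; ring]
    field_simp
  rw [mul_right_comm, key, ← Real.exp_mul, ← Real.exp_mul]
  linear_combination hexp2 - (Real.sinh x ^ (2 * H) *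
    ∫ r in (1:ℝ)..(Real.cosh x / Real.sinh x), betaKernel H r) * hexp1

theorem isLittleO_rpow_rpow_nhdsGT_zero {p q : ℝ} (h : p < q) :
    (fun t : ℝ => t ^ q) =o[𝓝[>] 0] fun t => t ^ p := by
  have hlim : Tendsto (fun t : ℝ => t ^ (q - p)) (𝓝[>] 0) (𝓝 0) := by
    have := (Real.continuousAt_rpow_const 0 (q - p) (Or.inr (sub_pos.2 h).le)).tendsto
    rw [Real.zero_rpow (sub_pos.2 h).ne'] at this
    exact this.mono_left nhdsWithin_le_nhds
  have hmul := (isBigO_refl (fun t : ℝ => t ^ p) _).mul_isLittleO ((isLittleO_one_iff ℝ).2 hlim)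
  refine hmul.congr' ?_ (Eventually.of_forall fun t => mul_one _)
  filter_upwards [self_mem_nhdsWithin] with t (ht : 0 < t)
  rw [← Real.rpow_add ht, add_sub_cancel]

theorem one_sub_inv_cosh_le (x : ℝ) : 1 - (Real.cosh x)⁻¹ ≤ x ^ 2 / 2 := by
  have h1 : Real.exp (-(x ^ 2 / 2)) ≤ (Real.cosh x)⁻¹ := by
    rw [Real.exp_neg]
    exact inv_anti₀ (Real.cosh_pos x) (Real.cosh_le_exp_half_sq x)
  linarith [Real.add_one_le_exp (-(x ^ 2 / 2))]

theorem inv_cosh_half_sub_one_isLittleO {p : ℝ} (hp : p < 2) :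
    (fun t : ℝ => (Real.cosh (t / 2))⁻¹ - 1) =o[𝓝[>] 0] fun t => t ^ p := by
  refine IsBigO.trans_isLittleO ?_ (isLittleO_rpow_rpow_nhdsGT_zero hp)
  refine IsBigO.of_bound 1 (Eventually.of_forall fun t => ?_)
  have h0 : (Real.cosh (t / 2))⁻¹ ≤ 1 := inv_le_one_of_one_le₀ (Real.one_le_cosh _)
  have h1 := one_sub_inv_cosh_le (t / 2)
  rw [Real.rpow_two, Real.norm_eq_abs, Real.norm_eq_abs, abs_of_nonpos (by linarith),
    abs_of_nonneg (sq_nonneg t)]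
  nlinarith [sq_nonneg t]

theorem tendsto_sinh_div_self : Tendsto (fun x => Real.sinh x / x) (𝓝[≠] 0) (𝓝 1) := by
  have h := (Real.hasDerivAt_sinh 0).tendsto_slope_zero
  simpa [Real.sinh_zero, Real.cosh_zero, div_eq_inv_mul] using h

theorem tendsto_cosh_div_sinh_nhdsGT_zero :
    Tendsto (fun x => Real.cosh x / Real.sinh x) (𝓝[>] 0) atTop := by
  have hsinh : Tendsto Real.sinh (𝓝[>] 0) (𝓝[>] 0) :=
    tendsto_nhdsWithin_of_tendsto_nhds_of_eventually_within _
      (Real.continuous_sinh.tendsto' 0 0 Real.sinh_zero |>.mono_left nhdsWithin_le_nhds)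
      (eventually_nhdsWithin_of_forall fun x hx => Real.sinh_pos_iff.2 hx)
  have hcosh : Tendsto Real.cosh (𝓝[>] 0) (𝓝 1) :=
    (Real.continuous_cosh.tendsto' 0 1 Real.cosh_zero).mono_left nhdsWithin_le_nhds
  exact hcosh.pos_mul_atTop one_pos (tendsto_inv_nhdsGT_zero.comp hsinh)

theorem isBigO_div_two_rpow_nhdsGT_zero {p : ℝ} (hp : 0 ≤ p) :
    (fun t : ℝ => (t / 2) ^ p) =O[𝓝[>] 0] fun t => t ^ p := by
  refine IsBigO.of_bound 1 ?_
  filter_upwards [self_mem_nhdsWithin] with t (ht : 0 < t)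
  rw [Real.norm_eq_abs, Real.norm_eq_abs, abs_of_nonneg (by positivity),
    abs_of_nonneg (by positivity), one_mul]
  exact Real.rpow_le_rpow (by positivity) (by linarith) hp

theorem tendsto_sinh_half_div_rpow_mul_integral_betaKernel {H : ℝ} (h0 : 0 < H) (h1 : H < 1) :
    Tendsto (fun t : ℝ => (Real.sinh (t / 2) / (t / 2)) ^ (2 * H)
        * ∫ r in (1:ℝ)..(Real.cosh (t / 2) / Real.sinh (t / 2)), betaKernel H r)
      (𝓝[>] 0) (𝓝 (Real.Gamma (1 - H) * Real.Gamma (1/2 + H) / Real.sqrt Real.pi)) := by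
  have hhalf : Tendsto (fun t : ℝ => t / 2) (𝓝[>] 0) (𝓝[>] 0) :=
    tendsto_nhdsWithin_of_tendsto_nhds_of_eventually_within _
      ((continuous_id.div_const 2).tendsto' 0 0 (zero_div 2) |>.mono_left nhdsWithin_le_nhds)
      (eventually_nhdsWithin_of_forall fun t (ht : 0 < t) => half_pos ht)
  have hsinh := (tendsto_sinh_div_self.comp (hhalf.mono_right
    (nhdsWithin_mono 0 fun x (hx : 0 < x) => hx.ne'))).rpow_const (p := 2 * H) (Or.inl one_ne_zero)
  have hI :=
    (tendsto_integral_betaKernel h0 h1).comp (tendsto_cosh_div_sinh_nhdsGT_zero.comp hhalf)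
  simpa using hsinh.mul hI

theorem stmt_17 (H : ℝ) (hH : H ∈ Set.Ioo (0 : ℝ) 1) :
    (fun t : ℝ =>
        (2 * H * Real.exp (-(H * t))
            * ∫ u in (0:ℝ)..1, (u * (u + Real.exp t - 1)) ^ (H - 1/2))
          - (1 - (Real.Gamma (1 - H) * Real.Gamma (1/2 + H) / Real.sqrt Real.pi)
                * (t / 2) ^ (2 * H)))
      =o[nhdsWithin 0 (Set.Ioi 0)] fun t : ℝ => t ^ (2 * H) := by
  obtain ⟨h0, h1⟩ := hH
  have hrem := (tendsto_const_nhds (x := Real.Gamma (1 - H) * Real.Gamma (1/2 + H)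
    / Real.sqrt Real.pi)).sub (tendsto_sinh_half_div_rpow_mul_integral_betaKernel h0 h1)
  rw [sub_self] at hrem
  have hsecond := ((isBigO_div_two_rpow_nhdsGT_zero (p := 2 * H) (by positivity)).mul_isLittleO
    ((isLittleO_one_iff ℝ).2 hrem)).congr_right fun t => mul_one _
  refine ((inv_cosh_half_sub_one_isLittleO (p := 2 * H) (by linarith)).add hsecond).congr' ?_
    EventuallyEq.rfl
  filter_upwards [self_mem_nhdsWithin] with t (ht : 0 < t)
  have hsplit : Real.sinh (t / 2) ^ (2 * H)
      = (t / 2) ^ (2 * H) * (Real.sinh (t / 2) / (t / 2)) ^ (2 * H) := by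
    rw [← Real.mul_rpow (by positivity)
      (div_nonneg (Real.sinh_nonneg_iff.2 (by positivity)) (by positivity)),
      mul_div_cancel₀ _ (by positivity)]
  rw [correlation_eq_hyperbolic h0 ht, hsplit]
  ring
end
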